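/- arXiv:1702.08684 — 2 statements merged into one kernel-verified Lean document; each statement's English description precedes it below -/
import Mathlib

section
/- In Bool, let S consist of the monomorphisms between countable Boolean algebras. Then every morphism f ∈ Po(S) is a pushout of some monomorphism s between countable Boolean algebras along a monomorphism u; that is, there is a pushout square with left vertical arrow s ∈ S, bottom-left vertex mapped into the domain of f by a monomorphism u, and f as the induced cobase change. -/
universe v u

open CategoryTheory CategoryTheory.Limits

namespace Paper

variable {K : Type u} [Category.{v} K]

/-- A preorder is `κ`-directed if every subset of cardinality `< κ` has an upper bound. -/
def IsCardinalDirected (P : Type v) [Preorder P] (κ : Cardinal.{v}) : Prop :=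
  ∀ S : Set P, Cardinal.mk S < κ → ∃ x : P, ∀ y ∈ S, y ≤ x

/-- An object `A` is `κ`-presentable: its hom-functor preserves `κ`-directed colimits. -/
def IsPresentable (κ : Cardinal.{v}) (A : K) : Prop :=
  ∀ (P : Type v) [Preorder P], IsCardinalDirected P κ →
    ∀ (D : P ⥤ K) (c : Cocone D), IsColimit c →
      (∀ h : A ⟶ c.pt, ∃ (x : P) (g : A ⟶ D.obj x), g ≫ c.ι.app x = h) ∧
      (∀ (x : P) (g g' : A ⟶ D.obj x), g ≫ c.ι.app x = g' ≫ c.ι.app x →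
        ∃ (y : P) (hxy : x ≤ y), g ≫ D.map (homOfLE hxy) = g' ≫ D.map (homOfLE hxy))

/-- `K` is a locally `λ`-presentable category: it is cocomplete and there is a set of
`λ`-presentable objects such that every object is a `λ`-directed colimit of objects
from this set. -/
def IsLocallyPresentable (K : Type u) [Category.{v} K] (lam : Cardinal.{v}) : Prop :=
  HasColimitsOfSize.{v, v} K ∧
  ∃ (ι : Type v) (G : ι → K), (∀ i, IsPresentable lam (G i)) ∧
    ∀ X : K, ∃ (P : Type v) (ip : Preorder P),
      letI := ip
      IsCardinalDirected P lam ∧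
      ∃ (D : P ⥤ K), (∀ p : P, ∃ i : ι, Nonempty (D.obj p ≅ G i)) ∧
        ∃ (c : Cocone D), Nonempty (IsColimit c) ∧ Nonempty (c.pt ≅ X)

/-- There is a representative set of `λ`-presentable objects of cardinality at most `κ`. -/
def PresentablesCardLE (K : Type u) [Category.{v} K] (lam κ : Cardinal.{v}) : Prop :=
  ∃ (ι : Type v) (G : ι → K), Cardinal.mk ι ≤ κ ∧
    ∀ X : K, IsPresentable lam X → ∃ i : ι, Nonempty (X ≅ G i)

/-- `Po X`: the class of all pushouts (cobase changes) of morphisms from `X`. -/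
def Po (X : MorphismProperty K) : MorphismProperty K :=
  fun _ _ f => ∃ (C D : K) (u : C ⟶ _) (s : C ⟶ D) (v : D ⟶ _),
    X s ∧ IsPushout u s f v

/-- `Po_λ X`: pushouts of morphisms from `X` with `λ`-presentable domain and codomain. -/
def PoPres (lam : Cardinal.{v}) (X : MorphismProperty K) : MorphismProperty K :=
  fun _ _ f => ∃ (C D : K) (u : C ⟶ _) (s : C ⟶ D) (v : D ⟶ _),
    X s ∧ IsPresentable lam C ∧ IsPresentable lam D ∧ IsPushout u s f v

/-- Ordinals `≤ γ`, the shape of a transfinite chain of length `γ`. -/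
abbrev ChainIndex (γ : Ordinal.{v}) := {i : Ordinal.{v} // i ≤ γ}

def chainBot (γ : Ordinal.{v}) : ChainIndex γ := ⟨0, zero_le⟩

def chainTop (γ : Ordinal.{v}) : ChainIndex γ := ⟨γ, le_refl γ⟩

/-- The canonical cocone with apex `D x` on the restriction of `D` to a subset `Q`
of elements `≤ x`. -/
@[simps]
def subCocone {P : Type*} [Preorder P] (D : P ⥤ K) (Q : Set P) (x : P)
    (hx : ∀ q : Q, (q : P) ≤ x) :
    Cocone ((Subtype.mono_coe (· ∈ Q)).functor ⋙ D) where
  pt := D.obj x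
  ι :=
    { app := fun q => D.map (homOfLE (hx q))
      naturality := fun q q' h => by
        dsimp
        rw [Category.comp_id]
        exact (D.map_comp _ _).symm }

/-- A chain `F : ChainIndex γ ⥤ K` is smooth if at every limit ordinal `j ≤ γ` the
canonical cocone of the restriction to `{i | i < j}` is a colimit cocone. -/
def IsSmoothChain {γ : Ordinal.{v}} (F : ChainIndex γ ⥤ K) : Prop :=
  ∀ j : ChainIndex γ, Order.IsSuccLimit j.1 →
    Nonempty (IsColimit (subCocone F (Set.Iio j) j (fun q => le_of_lt q.2)))

/-- `f` is a transfinite composition of length `γ` of morphisms from `X`: the composite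
of a smooth chain of length `γ` all of whose successor steps lie in `X`. -/
def IsTransfiniteCompositionOfLength (X : MorphismProperty K) (γ : Ordinal.{v})
    {A B : K} (f : A ⟶ B) : Prop :=
  ∃ F : ChainIndex γ ⥤ K, IsSmoothChain F ∧
    (∀ (i : ChainIndex γ) (hi : i.1 < γ),
      X (F.map (homOfLE (show i ≤ ⟨Order.succ i.1, Order.succ_le_of_lt hi⟩ from
        Order.le_succ i.1)))) ∧
    ∃ (e₀ : F.obj (chainBot γ) ≅ A) (e₁ : F.obj (chainTop γ) ≅ B),
      e₀.inv ≫ F.map (homOfLE (show chainBot γ ≤ chainTop γ from (zero_le : (0 : Ordinal.{v}) ≤ γ))) ≫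
        e₁.hom = f

/-- `Tc X`: the class of transfinite compositions of morphisms from `X`. -/
def Tc (X : MorphismProperty K) : MorphismProperty K :=
  fun _ _ f => ∃ γ : Ordinal.{v}, IsTransfiniteCompositionOfLength X γ f

/-- `κ`-`Tc X`: transfinite compositions of length `< κ`. -/
def TcLT (κ : Cardinal.{v}) (X : MorphismProperty K) : MorphismProperty K :=
  fun _ _ f => ∃ γ : Ordinal.{v}, γ < κ.ord ∧ IsTransfiniteCompositionOfLength X γ f

/-- `cell X = Tc (Po X)`: the class of `X`-cellular morphisms. -/
def Cell (X : MorphismProperty K) : MorphismProperty K := Tc (Po X)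

/-- The morphisms with the right lifting property w.r.t. every morphism of `X`. -/
def Rlp (X : MorphismProperty K) : MorphismProperty K :=
  fun _ _ g => ∀ ⦃A B : K⦄ (f : A ⟶ B), X f → HasLiftingProperty f g

/-- The morphisms with the left lifting property w.r.t. every morphism of `X`. -/
def Llp (X : MorphismProperty K) : MorphismProperty K :=
  fun _ _ f => ∀ ⦃A B : K⦄ (g : A ⟶ B), X g → HasLiftingProperty f g

/-- `cof X`: retracts of `X`-cellular morphisms in comma categories `K\𝒦`,
i.e. retracts in the under-category of the common domain. -/
def Cof (X : MorphismProperty K) : MorphismProperty K :=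
  fun _ _ f => ∃ (C : K) (g : _ ⟶ C), Cell X g ∧
    ∃ (i : _ ⟶ C) (r : C ⟶ _), f ≫ i = g ∧ g ≫ r = f ∧ i ≫ r = 𝟙 _

/-- A (proper) factorization system `(E, M)`: `E` consists of epimorphisms, `M` of
monomorphisms, `M = E^□`, `E = ^□M` and every morphism factors as `m ∘ e`. -/
structure IsFactorizationSystem (E M : MorphismProperty K) : Prop where
  epi : ∀ ⦃A B : K⦄ (f : A ⟶ B), E f → Epi f
  mono : ∀ ⦃A B : K⦄ (f : A ⟶ B), M f → Mono f
  rlp : M = Rlp E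
  llp : E = Llp M
  factor : ∀ ⦃A B : K⦄ (f : A ⟶ B), ∃ (C : K) (e : A ⟶ C) (m : C ⟶ B),
    E e ∧ M m ∧ e ≫ m = f

/-- `M` is special: it is the right class of a factorization system and `cell M = M`. -/
def IsSpecial (M : MorphismProperty K) : Prop :=
  (∃ E : MorphismProperty K, IsFactorizationSystem E M) ∧ Cell M = M

/-- `S ⊆ M` is `λ`-special: (S1) `S ⊆ M_λ`; (S2) `S` contains all isomorphisms between
`λ`-presentable objects; (S3) `λ`-`Tc (Po_λ S) = S`; (S4) the cancellation property. -/
structure IsLambdaSpecial (lam : Cardinal.{v}) (M S : MorphismProperty K) : Prop where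
  le : ∀ ⦃A B : K⦄ (f : A ⟶ B), S f → M f ∧ IsPresentable lam A ∧ IsPresentable lam B
  iso : ∀ ⦃A B : K⦄ (f : A ⟶ B), IsIso f →
    IsPresentable lam A → IsPresentable lam B → S f
  tc : TcLT lam (PoPres lam S) = S
  cancel : ∀ ⦃A B C : K⦄ (f : A ⟶ B) (g : B ⟶ C),
    Po S (f ≫ g) → Po S f → M g → Po S g

/-- `(M, S)` is a `λ`-special pair. -/
def IsSpecialPair (lam : Cardinal.{v}) (M S : MorphismProperty K) : Prop :=
  IsSpecial M ∧ IsLambdaSpecial lam M S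

/-- `X` is `(S,M,κ)`-injective: every `M`-morphism `A → X` with `A` `κ`-presentable
extends along every `Po S`-morphism `A → B` via an `M`-morphism `B → X`. -/
def IsSMInjective (S M : MorphismProperty K) (κ : Cardinal.{v}) (X : K) : Prop :=
  ∀ ⦃A B : K⦄ (f : A ⟶ B), Po S f → IsPresentable κ A →
    ∀ g : A ⟶ X, M g → ∃ h : B ⟶ X, M h ∧ f ≫ h = g

/-- `X` is an `S`-cellular object: the unique morphism from the initial object is
`S`-cellular. -/
def IsCellularObject (S : MorphismProperty K) (X : K) : Prop :=
  ∃ (O : K) (_ : IsInitial O) (f : O ⟶ X), Cell S f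

/-- `X` has size `κ`: its presentability rank is the successor `κ⁺`. -/
def HasSize (κ : Cardinal.{v}) (X : K) : Prop :=
  IsPresentable (Order.succ κ) X ∧
  ∀ μ : Cardinal.{v}, μ.IsRegular → μ < Order.succ κ → ¬ IsPresentable μ X

/-- `M` is closed under directed colimits (in the arrow category). -/
def ClosedUnderDirectedColimits (M : MorphismProperty K) : Prop :=
  ∀ (P : Type v) (ip : Preorder P),
    letI := ip
    ∀ (_ : IsDirected P (· ≤ ·)) (D₁ D₂ : P ⥤ K) (η : D₁ ⟶ D₂)
      (c₁ : Cocone D₁) (c₂ : Cocone D₂) (h₁ : IsColimit c₁) (_ : IsColimit c₂),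
      (∀ p : P, M (η.app p)) →
      M (h₁.desc (Cocone.mk c₂.pt (η ≫ c₂.ι)))

/-- The class of regular monomorphisms of `K`. -/
def regularMonos (K : Type u) [Category.{v} K] : MorphismProperty K :=
  fun _ _ f => Nonempty (RegularMono f)

/-- `K` is coregular: finitely cocomplete, with equalizers of cokernel pairs, and
regular monomorphisms are stable under pushouts. -/
structure IsCoregular (K : Type u) [Category.{v} K] : Prop where
  hasFiniteColimits : HasFiniteColimits K
  hasEqualizersOfCokernelPairs : ∀ ⦃A B : K⦄ (f : A ⟶ B) (P : K) (i₁ i₂ : B ⟶ P),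
    IsPushout f f i₁ i₂ → HasEqualizer i₁ i₂
  pushoutStable : ∀ ⦃A B C D : K⦄ (f : A ⟶ B) (u : A ⟶ C) (g : C ⟶ D) (v : B ⟶ D),
    IsPushout u f g v → Nonempty (RegularMono f) → Nonempty (RegularMono g)

section GoodDiagrams

variable {P : Type v} [PartialOrder P]

/-- A good poset: well-founded with a least element. -/
def IsGoodPoset (P : Type v) [PartialOrder P] : Prop :=
  WellFoundedLT P ∧ ∃ b : P, ∀ x : P, b ≤ x

/-- A `κ`-good poset: good, and every initial segment `↓x` has cardinality `< κ`. -/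
def IsKappaGoodPoset (P : Type v) [PartialOrder P] (κ : Cardinal.{v}) : Prop :=
  IsGoodPoset P ∧ ∀ x : P, Cardinal.mk (Set.Iic x) < κ

/-- `x` is isolated: `{y | y < x}` has a top element (the predecessor of `x`). -/
def IsIsolatedElem (x : P) : Prop := ∃ y : P, y < x ∧ ∀ z : P, z < x → z ≤ y

/-- A diagram over a good poset is smooth: at every limit element `x` (neither least
nor isolated) the canonical cocone on the restriction to `{y | y < x}` is a colimit. -/
def IsSmoothGoodDiagram (D : P ⥤ K) : Prop :=
  ∀ x : P, ¬ (∀ y : P, x ≤ y) → ¬ IsIsolatedElem x →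
    Nonempty (IsColimit (subCocone D (Set.Iio x) x (fun q => le_of_lt q.2)))

/-- The links of `D` (the morphisms `D (x⁻ → x)` for isolated `x`) lie in `X`. -/
def HasLinksIn (D : P ⥤ K) (X : MorphismProperty K) : Prop :=
  ∀ (x y : P) (h : y < x), (∀ z : P, z < x → z ≤ y) → X (D.map (homOfLE h.le))

/-- For every subset `Q` of cardinality `< κ` the colimit of the restriction of `D`
to `Q` is realized as some `D x`, via the morphisms of `D`. -/
def SmallSubcolimitsRealized (D : P ⥤ K) (κ : Cardinal.{v}) : Prop :=
  ∀ Q : Set P, Cardinal.mk Q < κ →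
    ∃ (x : P) (hx : ∀ q : Q, (q : P) ≤ x), Nonempty (IsColimit (subCocone D Q x hx))

end GoodDiagrams

end Paper

open CategoryTheory CategoryTheory.Limits Paper

/-!
Replace `u` and `v` by their images and `s` by the restriction of `f` between them. The new
square is again a pushout because the corestriction of `v` onto its image is an epimorphism,
and the images are countable as quotients of countable algebras. The restriction of `f` is
injective because `f` is: in `Bool` a pushout of an injective homomorphism is injective, as the
two-element algebra `Prop` separates points and every homomorphism into it extends along an
injective homomorphism (both by the prime ideal theorem).
-/

open Function Order

theorem CategoryTheory.IsPushout.of_epi_factor {C : Type*} [Category C]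
    {X A D B X' D' : C} {u : X ⟶ A} {s : X ⟶ D} {f : A ⟶ B} {v : D ⟶ B}
    (hP : IsPushout u s f v) {e : X ⟶ X'} {u' : X' ⟶ A} {s' : X' ⟶ D'} {t : D ⟶ D'}
    {v' : D' ⟶ B} [Epi t] (hu : e ≫ u' = u) (hv : t ≫ v' = v) (hs : e ≫ s' = s ≫ t)
    (w : u' ≫ f = s' ≫ v') : IsPushout u' s' f v' := by
  have hdesc (c : PushoutCocone u' s') : u ≫ c.inl = s ≫ t ≫ c.inr := by
    rw [← hu, Category.assoc, c.condition, ← Category.assoc, hs, Category.assoc]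
  refine IsPushout.of_isColimit (PushoutCocone.IsColimit.mk w
    (fun c => hP.desc c.inl (t ≫ c.inr) (hdesc c)) (fun c => hP.inl_desc ..) (fun c => ?_) ?_)
  · rw [← cancel_epi t, ← Category.assoc, hv, hP.inr_desc]
  · intro c m hl hr
    refine hP.hom_ext (by rw [hP.inl_desc, hl]) ?_
    rw [hP.inr_desc, ← hv, Category.assoc, hr]

namespace Order.Ideal

variable {α : Type*} [Lattice α] [BoundedOrder α] {J : Ideal α}

def IsPrime.toPropHom (hJ : J.IsPrime) : BoundedLatticeHom α Prop where
  toFun a := a ∉ J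
  map_sup' _ _ := propext <| sup_mem_iff.not.trans not_and_or
  map_inf' _ _ := propext <| (not_congr
    ⟨hJ.mem_or_mem, fun h => h.elim (J.lower inf_le_left) (J.lower inf_le_right)⟩).trans not_or
  map_top' := propext <| iff_true_intro hJ.top_notMem
  map_bot' := propext <| iff_false_intro (not_not_intro J.bot_mem)

end Order.Ideal

section PropHom

variable {α β : Type*}

theorem exists_propHom_of_disjoint [DistribLattice α] [BoundedOrder α] {F : PFilter α}
    {I : Ideal α} (h : Disjoint (F : Set α) I) :
    ∃ g : BoundedLatticeHom α Prop, (∀ a ∈ F, g a) ∧ ∀ a ∈ I, ¬ g a := by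
  obtain ⟨J, hJ, hIJ, hFJ⟩ := DistribLattice.prime_ideal_of_disjoint_filter_ideal h
  exact ⟨hJ.toPropHom, fun a ha => Set.disjoint_left.1 hFJ ha, fun a ha => not_not_intro (hIJ ha)⟩

theorem exists_propHom_of_not_le [DistribLattice α] [BoundedOrder α] {a b : α} (h : ¬ a ≤ b) :
    ∃ g : BoundedLatticeHom α Prop, g a ∧ ¬ g b := by
  have hdisj : Disjoint ((PFilter.principal a : PFilter α) : Set α) (Ideal.principal b) :=
    Set.disjoint_left.2 fun _ ha hb => h (le_trans (PFilter.mem_principal.1 ha) hb)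
  obtain ⟨g, hF, hI⟩ := exists_propHom_of_disjoint hdisj
  exact ⟨g, hF a (PFilter.mem_principal.2 le_rfl), hI b Ideal.mem_principal_self⟩

variable [BooleanAlgebra α] [BooleanAlgebra β]

def kernelImageIdeal (s : BoundedLatticeHom α β) (g : BoundedLatticeHom α Prop) : Ideal β where
  carrier := {z | ∃ c, ¬ g c ∧ z ≤ s c}
  lower' := fun _ _ hwz ⟨c, hc, hzc⟩ => ⟨c, hc, hwz.trans hzc⟩
  nonempty' := ⟨⊥, ⊥, by simp, bot_le⟩
  directed' := by
    rintro z ⟨c, hc, hzc⟩ w ⟨d, hd, hwd⟩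
    refine ⟨s (c ⊔ d), ⟨c ⊔ d, ?_, le_rfl⟩, hzc.trans ?_, hwd.trans ?_⟩
    · simpa using And.intro hc hd
    · simp
    · simp

theorem exists_propHom_comp_eq {s : BoundedLatticeHom α β} (hs : Injective s)
    (g : BoundedLatticeHom α Prop) : ∃ h : BoundedLatticeHom β Prop, h.comp s = g := by
  have hdisj : Disjoint ((PFilter.principal ⊤ : PFilter β) : Set β) (kernelImageIdeal s g) := by
    refine Set.disjoint_left.2 fun z hz ⟨c, hc, hzc⟩ => hc ?_
    have : s c = s ⊤ := by
      rw [map_top]; exact top_le_iff.1 ((PFilter.mem_principal.1 hz).trans hzc)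
    rw [hs this, map_top]; trivial
  obtain ⟨h, -, hI⟩ := exists_propHom_of_disjoint hdisj
  refine ⟨h, BoundedLatticeHom.ext fun c => propext ⟨fun hsc => ?_, fun hgc => ?_⟩⟩
  · by_contra hgc
    exact hI _ ⟨c, hgc, le_rfl⟩ hsc
  · -- `cᶜ` lies in the kernel of `g`, so `h` kills `s cᶜ = (s c)ᶜ`
    simpa using hI _ ⟨cᶜ, by simpa using hgc, le_rfl⟩

end PropHom

namespace BoundedLatticeHom

variable {α β : Type*} [Lattice α] [BoundedOrder α] [BooleanAlgebra β]

def codRestrict (f : BoundedLatticeHom α β) (L : BooleanSubalgebra β) (hf : ∀ a, f a ∈ L) :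
    BoundedLatticeHom α L where
  toFun a := ⟨f a, hf a⟩
  map_sup' a b := Subtype.ext (map_sup f a b)
  map_inf' a b := Subtype.ext (map_inf f a b)
  map_top' := Subtype.ext (map_top f)
  map_bot' := Subtype.ext (map_bot f)

end BoundedLatticeHom

namespace BoolAlg

variable {X Y A B D : BoolAlg.{0}}

/-- `Bool × Bool` is the free Boolean algebra on the generator `(true, false)`. -/
def generatorHom {γ : Type*} [BooleanAlgebra γ] (c : γ) : BoundedLatticeHom (Bool × Bool) γ where
  toFun p := (if p.1 then c else ⊥) ⊔ (if p.2 then cᶜ else ⊥)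
  map_sup' p q := by
    rcases p with ⟨_ | _, _ | _⟩ <;> rcases q with ⟨_ | _, _ | _⟩ <;> simp [sup_comm]
  map_inf' p q := by
    rcases p with ⟨_ | _, _ | _⟩ <;> rcases q with ⟨_ | _, _ | _⟩ <;> simp
  map_top' := by simp
  map_bot' := by simp

theorem comp_generatorHom {γ δ : Type*} [BooleanAlgebra γ] [BooleanAlgebra δ]
    (f : BoundedLatticeHom γ δ) (c : γ) : f.comp (generatorHom c) = generatorHom (f c) := by
  ext ⟨_ | _, _ | _⟩ <;> simp [generatorHom]

theorem mono_iff_injective (f : X ⟶ Y) : Mono f ↔ Injective f := by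
  refine ⟨fun _ x y hxy => ?_, ConcreteCategory.mono_of_injective f⟩
  have h : ofHom (generatorHom x) ≫ f = ofHom (generatorHom y) ≫ f := by
    ext1; simp [comp_generatorHom, hxy]
  simpa [generatorHom] using congr($((cancel_mono f).1 h) (true, false))

theorem injective_of_isPushout {u : X ⟶ A} {s : X ⟶ D} {f : A ⟶ B} {v : D ⟶ B}
    (hP : IsPushout u s f v) (hs : Injective s) : Injective f := by
  suffices h : ∀ a b, f a ≤ f b → a ≤ b from
    fun a b hab => le_antisymm (h a b hab.le) (h b a hab.ge)
  intro a b hab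
  by_contra hnle
  obtain ⟨g, hga, hgb⟩ := exists_propHom_of_not_le hnle
  obtain ⟨h, hh⟩ := exists_propHom_comp_eq hs (g.comp u.hom)
  let φ : B ⟶ of Prop := hP.desc (ofHom g) (ofHom h) (by ext1; exact hh.symm)
  have hφ (a : A) : φ (f a) = g a := congr($(hP.inl_desc ..) a)
  have := OrderHomClass.mono (ConcreteCategory.hom φ) hab
  rw [hφ, hφ] at this
  exact hgb (this hga)

abbrev range (f : X ⟶ Y) : BoolAlg.{0} := of (BooleanSubalgebra.map f.hom ⊤)

def rangeι (f : X ⟶ Y) : range f ⟶ Y := ofHom (BooleanSubalgebra.subtype _)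

def rangeRestrict (f : X ⟶ Y) : X ⟶ range f :=
  ofHom (f.hom.codRestrict _ fun _ => BooleanSubalgebra.mem_map_of_mem _ trivial)

theorem rangeRestrict_ι (f : X ⟶ Y) : rangeRestrict f ≫ rangeι f = f := rfl

instance (f : X ⟶ Y) : Mono (rangeι f) :=
  ConcreteCategory.mono_of_injective _ (BooleanSubalgebra.subtype_injective _)

instance (f : X ⟶ Y) : Epi (rangeRestrict f) :=
  ConcreteCategory.epi_of_surjective _ <| by
    rintro ⟨_, x, -, rfl⟩
    exact ⟨x, rfl⟩

instance (f : X ⟶ Y) [Countable X] : Countable (range f) :=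
  (Set.countable_univ.image f).to_subtype

def rangeMap {u : X ⟶ A} {s : X ⟶ D} {f : A ⟶ B} {v : D ⟶ B} (w : u ≫ f = s ≫ v) :
    range u ⟶ range v :=
  ofHom ((f.hom.comp (BooleanSubalgebra.subtype _)).codRestrict _ <| by
    rintro ⟨_, x, -, rfl⟩
    exact ⟨s x, trivial, congr($w.symm x)⟩)

theorem rangeMap_ι {u : X ⟶ A} {s : X ⟶ D} {f : A ⟶ B} {v : D ⟶ B} (w : u ≫ f = s ≫ v) :
    rangeMap w ≫ rangeι v = rangeι u ≫ f := rfl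

theorem rangeRestrict_rangeMap {u : X ⟶ A} {s : X ⟶ D} {f : A ⟶ B} {v : D ⟶ B}
    (w : u ≫ f = s ≫ v) : rangeRestrict u ≫ rangeMap w = s ≫ rangeRestrict v := by
  ext x
  exact congr($w x)

end BoolAlg

open BoolAlg

/-- in `Bool`, every pushout of a monomorphism between countable Boolean
algebras is a pushout of a monomorphism between countable Boolean algebras along a
monomorphism. -/
theorem boolAlg_po_along_mono
    {A B : BoolAlg.{0}} (f : A ⟶ B)
    (hf : Po (fun (C D : BoolAlg.{0}) s => Mono s ∧ Countable ↥C ∧ Countable ↥D) f) :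
    ∃ (C D : BoolAlg.{0}) (u : C ⟶ A) (s : C ⟶ D) (v : D ⟶ B),
      (Mono s ∧ Countable ↥C ∧ Countable ↥D) ∧ Mono u ∧ IsPushout u s f v := by
  obtain ⟨C, D, u, s, v, ⟨hs, hC, hD⟩, hP⟩ := hf
  have : Mono f := (mono_iff_injective f).2 <|
    injective_of_isPushout hP ((mono_iff_injective s).1 hs)
  have : Mono (rangeMap hP.w ≫ rangeι v) := by rw [rangeMap_ι]; infer_instance
  exact ⟨range u, range v, rangeι u, rangeMap hP.w, rangeι v,
    ⟨mono_of_mono _ (rangeι v), inferInstance, inferInstance⟩, inferInstance,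
    hP.of_epi_factor (rangeRestrict_ι u) (rangeRestrict_ι v) (rangeRestrict_rangeMap hP.w)
      (rangeMap_ι hP.w).symm⟩
end

section
/- Let K be a locally presentable category and M a special class of morphisms (i.e., M is the right class of a factorization system (E,M) with E epimorphisms and M monomorphisms, and cell(M) = M) which contains all split monomorphisms. Then M is cofibrantly closed: cof(M) = M. -/
universe v u

open CategoryTheory CategoryTheory.Limits

/-! `M = E^□` is stable under retracts, because lifting properties pass to retracts, and
`cof M` consists of retracts of `M`-cellular morphisms, which lie in `cell M = M`. -/

namespace Paper

variable {K : Type u} [Category.{v} K]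

def retractArrowOfUnder {A B C : K} {f : A ⟶ B} {g : A ⟶ C} {i : B ⟶ C} {r : C ⟶ B}
    (hfi : f ≫ i = g) (hgr : g ≫ r = f) (hir : i ≫ r = 𝟙 B) : RetractArrow f g where
  i := Arrow.homMk (𝟙 A) i (by simpa using hfi.symm)
  r := Arrow.homMk (𝟙 A) r (by simpa using hgr.symm)
  retract := by ext <;> simp [hir]

lemma cof_le_of_cell_le {X Y : MorphismProperty K} [Y.IsStableUnderRetracts]
    (h : Cell X ≤ Y) : Cof X ≤ Y := by
  rintro _ _ f ⟨_, g, hg, i, r, hfi, hgr, hir⟩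
  exact Y.of_retract (retractArrowOfUnder hfi hgr hir) (h g hg)

lemma cell_le_cof (X : MorphismProperty K) : Cell X ≤ Cof X :=
  fun _ B f hf => ⟨B, f, hf, 𝟙 B, 𝟙 B, by simp, by simp, by simp⟩

theorem cof_eq_of_cell_eq {X : MorphismProperty K} [X.IsStableUnderRetracts]
    (h : Cell X = X) : Cof X = X :=
  le_antisymm (cof_le_of_cell_le h.le) (h.ge.trans (cell_le_cof X))

lemma IsFactorizationSystem.isStableUnderRetracts_right {E M : MorphismProperty K}
    (h : IsFactorizationSystem E M) : M.IsStableUnderRetracts :=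
  h.rlp ▸ MorphismProperty.rlp_isStableUnderRetracts E

end Paper

open CategoryTheory CategoryTheory.Limits Paper

theorem special_class_is_cofibrantly_closed_general
    {K : Type u} [Category.{v} K]
    (M : MorphismProperty K) (hM : IsSpecial M) :
    Cof M = M := by
  obtain ⟨⟨E, hEM⟩, hcell⟩ := hM
  have := hEM.isStableUnderRetracts_right
  exact cof_eq_of_cell_eq hcell

/-- in a locally presentable category, a special class `M` containing all
split monomorphisms is cofibrantly closed: `cof M = M`. -/
theorem special_class_is_cofibrantly_closed
    {K : Type u} [Category.{v} K]
    (hK : ∃ lam : Cardinal.{v}, lam.IsRegular ∧ IsLocallyPresentable K lam)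
    (M : MorphismProperty K) (hM : IsSpecial M)
    (hsplit : ∀ ⦃A B : K⦄ (f : A ⟶ B), IsSplitMono f → M f) :
    Cof M = M :=
  special_class_is_cofibrantly_closed_general M hM
end
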